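/- arXiv:1712.01933 — 2 statements merged into one kernel-verified Lean document; each statement's English description precedes it below -/
import Mathlib

section
/- Let PP(κ) be the fixed-size partition polytope. Then a vector g ∈ ℝ^{k×n} is a circuit of PP(κ) if and only if g describes a single cyclical exchange of items among the clusters; consequently, every circuit walk in PP(κ) is an edge walk. -/
/-!
STATEMENT 17: A vector g ∈ ℝ^{k×n} is a circuit of the fixed-size partition polytope PP(κ)
iff g describes a single cyclical exchange of items among the clusters; consequently, every
circuit walk in PP(κ) is an edge walk.
-/

/-- The fixed-size partition polytope `PP(κ) ⊆ ℝ^{k×n}`. -/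
def PPfixed {k n : ℕ} (κ : Fin k → ℕ) : Set (Fin k × Fin n → ℝ) :=
  {y | (∀ i, ∑ j, y (i, j) = (κ i : ℝ)) ∧
       (∀ j, ∑ i, y (i, j) = 1) ∧
       ∀ p, 0 ≤ y p}

/-- `g` is a circuit of the constraint system defining `PP(κ)`: a nonzero kernel element of the
equality constraints with coprime integer components such that `B g` is support-minimal,
where `B` collects the nonnegativity constraints. -/
def IsCircuitPPfixed {k n : ℕ} (g : Fin k × Fin n → ℝ) : Prop :=
  (∀ i, ∑ j, g (i, j) = 0) ∧ (∀ j, ∑ i, g (i, j) = 0) ∧ g ≠ 0 ∧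
  (∃ gz : Fin k × Fin n → ℤ, (∀ p, g p = (gz p : ℝ)) ∧ Finset.univ.gcd gz = 1) ∧
  ¬ ∃ y : Fin k × Fin n → ℝ,
      (∀ i, ∑ j, y (i, j) = 0) ∧ (∀ j, ∑ i, y (i, j) = 0) ∧ y ≠ 0 ∧
      {p | -(y p) ≠ 0} ⊂ {p | -(g p) ≠ 0}

/-- `g` describes a single cyclical exchange of items among distinct clusters
`c 0, …, c (m-1)` via distinct items `jj 0, …, jj (m-1)`. -/
def IsCyclicalExchange {k n : ℕ} (g : Fin k × Fin n → ℝ) : Prop :=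
  ∃ (m : ℕ) (hm : 2 ≤ m) (c : Fin m → Fin k) (jj : Fin m → Fin n),
    Function.Injective c ∧ Function.Injective jj ∧
    g = ∑ t : Fin m,
      (Pi.single (c ⟨(t.1 + 1) % m, Nat.mod_lt _ (by omega)⟩, jj t) (1 : ℝ) -
        Pi.single (c t, jj t) (1 : ℝ))

/-- A circuit walk: a sequence of points of `P` starting and ending at vertices,
each step a maximal step along a circuit direction. -/
def IsCircuitWalk {ι : Type*} (P : Set (ι → ℝ)) (Circ : (ι → ℝ) → Prop)
    {k : ℕ} (y : Fin (k + 1) → ι → ℝ) : Prop :=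
  y 0 ∈ P.extremePoints ℝ ∧ y (Fin.last k) ∈ P.extremePoints ℝ ∧
  ∀ i : Fin k, y i.castSucc ∈ P ∧
    ∃ (g : ι → ℝ) (α : ℝ), Circ g ∧ 0 < α ∧
      y i.succ = y i.castSucc + α • g ∧
      ∀ β : ℝ, α < β → y i.castSucc + β • g ∉ P

/-- A circuit walk is an edge walk if each of its segments is a one-dimensional face
(an edge) of `P`. -/
def IsEdgeWalk {ι : Type*} (P : Set (ι → ℝ)) {k : ℕ} (y : Fin (k + 1) → ι → ℝ) : Prop :=
  ∀ i : Fin k, y i.castSucc ≠ y i.succ ∧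
    IsExtreme ℝ P (segment ℝ (y i.castSucc) (y i.succ))

/-!
The support of a vector with zero row and column sums meets every row and column it touches at
least twice, so walking alternately along a row and a column inside it must close up into an
exchange cycle. Conversely, a vector with zero row and column sums supported on the cells of an
exchange cycle is a multiple of the cycle's `±1` vector: each row and column of the cycle holds
exactly two of its cells, which carries the value around the cycle. Support-minimality and the
gcd condition then force a circuit to be `±` a cycle vector, and reversing the cycle absorbs the
sign.

For walks: the same cycle argument applied to the non-integral entries shows that vertices are
`0/1`. From a `0/1` point, a maximal step along a cycle has length exactly `1` and lands on a `0/1`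
point, and the segment it traverses is the face of `PP(κ)` on which every coordinate vanishing on
both the point and the cycle vanishes.
-/

open Finset Function

section Sums

variable {ι : Type*} [Fintype ι] [DecidableEq ι]

theorem exists_ne_notMem_of_sum_mem {G : Type*} [AddCommGroup G] (A : AddSubgroup G)
    {f : ι → G} (hsum : ∑ i, f i ∈ A) {a : ι} (ha : f a ∉ A) : ∃ b ≠ a, f b ∉ A := by
  by_contra! h
  have hrest : ∑ b ∈ univ.erase a, f b ∈ A := A.sum_mem fun b hb => h b (ne_of_mem_erase hb)
  rw [← add_sum_erase univ f (mem_univ a)] at hsum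
  exact ha (by simpa using A.sub_mem hsum hrest)

theorem eq_zero_of_apply_eq_sum {f : ι → ℝ} (hf : ∀ i, 0 ≤ f i) {a : ι} (ha : f a = ∑ i, f i)
    {b : ι} (hb : b ≠ a) : f b = 0 := by
  rw [← add_sum_erase univ f (mem_univ a), left_eq_add] at ha
  exact (sum_eq_zero_iff_of_nonneg fun i _ => hf i).1 ha b (mem_erase.2 ⟨hb, mem_univ b⟩)

end Sums

theorem Fin.mk_add_one_mod {m : ℕ} [NeZero m] (t : Fin m) (h : (t.1 + 1) % m < m) :
    (⟨(t.1 + 1) % m, h⟩ : Fin m) = t + 1 :=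
  Fin.ext (by simp [Fin.val_add])

theorem Fin.add_one_ne_self {m : ℕ} [NeZero m] (hm : 2 ≤ m) (t : Fin m) : t + 1 ≠ t := by
  have : m ≠ 1 := by omega
  simpa

theorem Fin.apply_eq_apply_zero_of_forall_apply_add_one {m : ℕ} [NeZero m] {γ : Type*}
    {f : Fin m → γ} (h : ∀ t, f (t + 1) = f t) (t : Fin m) : f t = f 0 := by
  obtain ⟨k, hk⟩ := t
  induction k with
  | zero => rfl
  | succ k ih =>
    rw [show (⟨k + 1, hk⟩ : Fin m) = ⟨k, by omega⟩ + 1 from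
      Fin.ext (by simp [Fin.val_add, Nat.mod_eq_of_lt hk]), h, ih]

theorem injective_fin_of_pairwise_ne {γ : Type*} {m : ℕ} {f : ℕ → γ}
    (hf : ∀ u v, u < v → v < m → f u ≠ f v) : Injective fun t : Fin m => f t := fun u v huv => by
  by_contra hne
  rcases lt_or_gt_of_ne (Fin.val_ne_of_ne hne) with h | h
  · exact hf _ _ h v.2 huv
  · exact hf _ _ h u.2 huv.symm

theorem eq_zero_of_add_mem_of_sub_mem_extremePoints {E : Type*} [AddCommGroup E] [Module ℝ E]
    {A : Set E} {x v : E} (hx : x ∈ A.extremePoints ℝ) (hadd : x + v ∈ A) (hsub : x - v ∈ A) :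
    v = 0 := by
  have hmid : x ∈ openSegment ℝ (x - v) (x + v) :=
    ⟨1 / 2, 1 / 2, by norm_num, by norm_num, by norm_num, by module⟩
  simpa using hx.2 hsub hadd hmid

theorem isExtreme_setOf_apply_eq_zero {ι : Type*} {A : Set (ι → ℝ)}
    (hA : ∀ x ∈ A, ∀ i, 0 ≤ x i) (Z : Set ι) : IsExtreme ℝ A {x ∈ A | ∀ i ∈ Z, x i = 0} := by
  refine ⟨Set.sep_subset _ _, ?_⟩
  rintro x₁ hx₁ x₂ hx₂ - ⟨-, hZ⟩ ⟨a, b, ha, hb, -, rfl⟩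
  refine ⟨hx₁, fun i hi => ?_⟩
  have := (add_eq_zero_iff_of_nonneg (mul_nonneg ha.le (hA _ hx₁ i))
    (mul_nonneg hb.le (hA _ hx₂ i))).1 (by simpa using hZ i hi)
  exact (mul_eq_zero.1 this.1).resolve_left ha.ne'

variable {α β : Type*}

/-- Item `item t` leaves cluster `cluster t` and joins cluster `cluster (t + 1)`, indices being
taken modulo `length`. -/
structure ExchangeCycle (α β : Type*) where
  length : ℕ
  two_le_length : 2 ≤ length
  cluster : Fin length → α
  item : Fin length → β
  cluster_injective : Injective cluster
  item_injective : Injective item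

def zeroMarginals (α β : Type*) [Fintype α] [Fintype β] : Submodule ℝ (α × β → ℝ) where
  carrier := {g | (∀ i, ∑ j, g (i, j) = 0) ∧ ∀ j, ∑ i, g (i, j) = 0}
  add_mem' {g h} hg hh :=
    ⟨fun i => by simp [sum_add_distrib, hg.1 i, hh.1 i],
      fun j => by simp [sum_add_distrib, hg.2 j, hh.2 j]⟩
  zero_mem' := ⟨fun _ => by simp, fun _ => by simp⟩
  smul_mem' c {g} hg := ⟨fun i => by simp [← mul_sum, hg.1 i], fun j => by simp [← mul_sum, hg.2 j]⟩

namespace ExchangeCycle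

variable (C : ExchangeCycle α β)

instance : NeZero C.length := ⟨by have := C.two_le_length; omega⟩

theorem cluster_add_one_ne (t : Fin C.length) : C.cluster (t + 1) ≠ C.cluster t :=
  C.cluster_injective.ne (Fin.add_one_ne_self C.two_le_length t)

theorem item_add_one_ne (t : Fin C.length) : C.item (t + 1) ≠ C.item t :=
  C.item_injective.ne (Fin.add_one_ne_self C.two_le_length t)

def reverse : ExchangeCycle α β where
  length := C.length
  two_le_length := C.two_le_length
  cluster t := C.cluster (-t)
  item t := C.item (-t - 1)
  cluster_injective := C.cluster_injective.comp neg_injective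
  item_injective := C.item_injective.comp (sub_left_injective.comp neg_injective)

variable [DecidableEq α] [DecidableEq β]

def vec : α × β → ℝ :=
  ∑ t, (Pi.single (C.cluster (t + 1), C.item t) 1 - Pi.single (C.cluster t, C.item t) 1)

theorem vec_apply_item (i : α) (t : Fin C.length) :
    C.vec (i, C.item t) =
      (if i = C.cluster (t + 1) then 1 else 0) - if i = C.cluster t then 1 else 0 := by
  rw [vec, Finset.sum_apply, Fintype.sum_eq_single t fun s hs => ?_]
  · simp [Pi.single_apply]
  · simp [C.item_injective.ne hs.symm]

theorem vec_apply_of_forall_ne {j : β} (hj : ∀ t, j ≠ C.item t) (i : α) : C.vec (i, j) = 0 := by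
  simp [vec, Finset.sum_apply, hj]

theorem vec_apply_source (t : Fin C.length) : C.vec (C.cluster t, C.item t) = -1 := by
  simp [vec_apply_item, C.cluster_add_one_ne t |>.symm]

theorem vec_apply_target (t : Fin C.length) : C.vec (C.cluster (t + 1), C.item t) = 1 := by
  simp [vec_apply_item, C.cluster_add_one_ne t]

theorem vec_apply_item_of_ne {i : α} {t : Fin C.length} (h₀ : i ≠ C.cluster t)
    (h₁ : i ≠ C.cluster (t + 1)) : C.vec (i, C.item t) = 0 := by
  simp [vec_apply_item, h₀, h₁]

theorem vec_apply_cluster_of_ne {j : β} {t : Fin C.length} (h₀ : j ≠ C.item t)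
    (h₁ : j ≠ C.item (t + 1)) : C.vec (C.cluster (t + 1), j) = 0 := by
  by_cases hj : ∃ s, j = C.item s
  · obtain ⟨s, rfl⟩ := hj
    refine C.vec_apply_item_of_ne (fun h => h₁ ?_) (fun h => h₀ ?_)
    · rw [C.cluster_injective h]
    · rw [add_left_injective 1 (C.cluster_injective h)]
  · exact C.vec_apply_of_forall_ne (not_exists.1 hj) _

theorem eq_source_or_eq_target_of_vec_ne_zero {p : α × β} (hp : C.vec p ≠ 0) :
    (∃ t, p = (C.cluster t, C.item t)) ∨ ∃ t, p = (C.cluster (t + 1), C.item t) := by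
  obtain ⟨i, j⟩ := p
  by_cases hj : ∃ t, j = C.item t
  · obtain ⟨t, rfl⟩ := hj
    by_cases h₀ : i = C.cluster t
    · exact .inl ⟨t, by rw [h₀]⟩
    by_cases h₁ : i = C.cluster (t + 1)
    · exact .inr ⟨t, by rw [h₁]⟩
    exact absurd (C.vec_apply_item_of_ne h₀ h₁) hp
  · exact absurd (C.vec_apply_of_forall_ne (not_exists.1 hj) i) hp

theorem vec_ne_zero : C.vec ≠ 0 := fun h => by
  simpa [C.vec_apply_source 0] using congrFun h (C.cluster 0, C.item 0)

theorem vec_reverse : C.reverse.vec = -C.vec := by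
  change ∑ u : Fin C.length, (Pi.single (C.cluster (-(u + 1)), C.item (-u - 1)) 1 -
    Pi.single (C.cluster (-u), C.item (-u - 1)) 1) = -C.vec
  rw [vec, ← sum_neg_distrib]
  refine Fintype.sum_equiv (Equiv.subLeft (-1)) _ _ fun u => ?_
  have e₁ : -u - 1 = -1 - u := by abel
  have e₂ : -(u + 1) = -1 - u := by abel
  have e₃ : -u = -1 - u + 1 := by abel
  rw [Equiv.subLeft_apply, neg_sub, e₁, e₂, e₃]

theorem exists_intCast_eq_vec_apply (p : α × β) : ∃ e : ℤ, (e : ℝ) = C.vec p := by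
  by_cases hp : C.vec p = 0
  · exact ⟨0, by simp [hp]⟩
  rcases C.eq_source_or_eq_target_of_vec_ne_zero hp with ⟨t, rfl⟩ | ⟨t, rfl⟩
  · exact ⟨-1, by simp [C.vec_apply_source]⟩
  · exact ⟨1, by simp [C.vec_apply_target]⟩

variable [Fintype α] [Fintype β]

theorem vec_mem_zeroMarginals : C.vec ∈ zeroMarginals α β := by
  refine ⟨fun i => ?_, fun j => ?_⟩
  · rw [← Fintype.sum_of_injective C.item C.item_injective (fun t => C.vec (i, C.item t)) _
      (fun j hj => C.vec_apply_of_forall_ne (fun t h => hj ⟨t, h.symm⟩) i) fun _ => rfl]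
    simp only [vec_apply_item, sum_sub_distrib]
    rw [sub_eq_zero]
    exact Fintype.sum_equiv (Equiv.addRight 1) _ _ fun _ => rfl
  · by_cases hj : ∃ t, j = C.item t
    · obtain ⟨t, rfl⟩ := hj
      simp [vec_apply_item]
    · simp [C.vec_apply_of_forall_ne (not_exists.1 hj)]

theorem eq_smul_vec_of_support_subset {d : α × β → ℝ} (hd : d ∈ zeroMarginals α β)
    (hsupp : ∀ p, C.vec p = 0 → d p = 0) :
    d = (-d (C.cluster 0, C.item 0)) • C.vec := by
  have hcol (t : Fin C.length) :
      d (C.cluster t, C.item t) + d (C.cluster (t + 1), C.item t) = 0 := by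
    rw [← hd.2 (C.item t), Fintype.sum_eq_add _ _ (C.cluster_add_one_ne t).symm]
    exact fun i hi => hsupp _ (C.vec_apply_item_of_ne hi.1 hi.2)
  have hrow (t : Fin C.length) :
      d (C.cluster (t + 1), C.item t) + d (C.cluster (t + 1), C.item (t + 1)) = 0 := by
    rw [← hd.1 (C.cluster (t + 1)), Fintype.sum_eq_add _ _ (C.item_add_one_ne t).symm]
    exact fun j hj => hsupp _ (C.vec_apply_cluster_of_ne hj.1 hj.2)
  have hsource : ∀ t, d (C.cluster t, C.item t) = d (C.cluster 0, C.item 0) :=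
    Fin.apply_eq_apply_zero_of_forall_apply_add_one fun t => by linarith [hcol t, hrow t]
  ext p
  by_cases hp : C.vec p = 0
  · simp [hp, hsupp p hp]
  rcases C.eq_source_or_eq_target_of_vec_ne_zero hp with ⟨t, rfl⟩ | ⟨t, rfl⟩
  · simp [C.vec_apply_source, hsource]
  · simp [C.vec_apply_target, ← hsource t]
    linarith [hcol t]

end ExchangeCycle

namespace ExchangeCycle

theorem exists_of_pairwise_ne {S : Set (α × β)} {m : ℕ} (hm : 2 ≤ m) {a : ℕ → α} {b : ℕ → β}
    (ha : ∀ u v, u < v → v < m → a u ≠ a v) (hb : ∀ u v, u < v → v < m → b u ≠ b v)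
    (hS : ∀ t < m, (a t, b t) ∈ S ∧ (a ((t + 1) % m), b t) ∈ S) :
    ∃ C : ExchangeCycle α β, ∀ t, (C.cluster t, C.item t) ∈ S ∧
      (C.cluster (t + 1), C.item t) ∈ S := by
  have : NeZero m := ⟨by omega⟩
  refine ⟨⟨m, hm, fun t => a t, fun t => b t, injective_fin_of_pairwise_ne ha,
    injective_fin_of_pairwise_ne hb⟩, fun t => ?_⟩
  simpa [Fin.val_add] using hS t t.2

theorem exists_alternating_seq {S : Set (α × β)} (hrow : ∀ p ∈ S, ∃ j ≠ p.2, (p.1, j) ∈ S)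
    (hcol : ∀ p ∈ S, ∃ i ≠ p.1, (i, p.2) ∈ S) (hS : S.Nonempty) :
    ∃ (r : ℕ → α) (q : ℕ → β), ∀ t, (r t, q t) ∈ S ∧ (r (t + 1), q t) ∈ S ∧
      r (t + 1) ≠ r t ∧ q (t + 1) ≠ q t := by
  have hstep (p : S) : ∃ p' : S, (p'.1.1, p.1.2) ∈ S ∧ p'.1.1 ≠ p.1.1 ∧ p'.1.2 ≠ p.1.2 := by
    obtain ⟨i, hi, hiS⟩ := hcol p p.2
    obtain ⟨j, hj, hjS⟩ := hrow _ hiS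
    exact ⟨⟨(i, j), hjS⟩, hiS, hi, hj⟩
  choose F hF using hstep
  let w (t : ℕ) : S := F^[t] ⟨_, hS.some_mem⟩
  have hw (t : ℕ) : w (t + 1) = F (w t) := iterate_succ_apply' ..
  refine ⟨fun t => (w t).1.1, fun t => (w t).1.2, fun t => ?_⟩
  simp only [hw]
  exact ⟨(w t).2, hF (w t)⟩

def transpose (C : ExchangeCycle β α) : ExchangeCycle α β where
  length := C.length
  two_le_length := C.two_le_length
  cluster := C.item
  item t := C.cluster (t + 1)
  cluster_injective := C.item_injective
  item_injective := C.cluster_injective.comp (add_left_injective 1)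

theorem exists_of_first_repeat {S : Set (α × β)} {r : ℕ → α} {q : ℕ → β}
    (hrq : ∀ t, (r t, q t) ∈ S ∧ (r (t + 1), q t) ∈ S ∧ r (t + 1) ≠ r t)
    {s T : ℕ} (hsT : s < T) (hs : r s = r T)
    (hr : ∀ u v, u < v → v < T → r u ≠ r v) (hq : ∀ u v, u < v → v < T → q u ≠ q v) :
    ∃ C : ExchangeCycle α β, ∀ t, (C.cluster t, C.item t) ∈ S ∧
      (C.cluster (t + 1), C.item t) ∈ S := by
  have hs₁ : s + 1 ≠ T := fun h => (hrq s).2.2 (by rw [h, hs])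
  refine exists_of_pairwise_ne (m := T - s) (by omega) (a := fun t => r (s + t))
    (b := fun t => q (s + t)) (fun u v huv hv => hr _ _ (by omega) (by omega))
    (fun u v huv hv => hq _ _ (by omega) (by omega)) fun t ht => ⟨(hrq _).1, ?_⟩
  rcases Nat.lt_or_ge (t + 1) (T - s) with h | h
  · simpa [Nat.mod_eq_of_lt h, ← add_assoc] using (hrq (s + t)).2.1
  · have hwrap : (t + 1) % (T - s) = 0 := by rw [show t + 1 = T - s by omega, Nat.mod_self]
    have hlast := (hrq (s + t)).2.1
    rw [show s + t + 1 = T by omega, ← hs] at hlast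
    simpa [hwrap] using hlast

theorem exists_of_forall_exists_ne [Finite α] [Finite β] {S : Set (α × β)}
    (hrow : ∀ p ∈ S, ∃ j ≠ p.2, (p.1, j) ∈ S) (hcol : ∀ p ∈ S, ∃ i ≠ p.1, (i, p.2) ∈ S)
    (hS : S.Nonempty) :
    ∃ C : ExchangeCycle α β, ∀ t, (C.cluster t, C.item t) ∈ S ∧
      (C.cluster (t + 1), C.item t) ∈ S := by
  classical
  obtain ⟨r, q, hrq⟩ := exists_alternating_seq hrow hcol hS
  have hrep : ∃ T, (∃ s < T, r s = r T) ∨ ∃ s < T, q s = q T := by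
    obtain ⟨u, v, huv, he⟩ := Finite.exists_ne_map_eq_of_infinite r
    rcases lt_or_gt_of_ne huv with h | h
    · exact ⟨v, .inl ⟨u, h, he⟩⟩
    · exact ⟨u, .inl ⟨v, h, he.symm⟩⟩
  set T := Nat.find hrep
  have hr : ∀ u v, u < v → v < T → r u ≠ r v := fun u v huv hv he =>
    Nat.find_min hrep hv (.inl ⟨u, huv, he⟩)
  have hq : ∀ u v, u < v → v < T → q u ≠ q v := fun u v huv hv he =>
    Nat.find_min hrep hv (.inr ⟨u, huv, he⟩)
  by_cases hrowrep : ∃ s < T, r s = r T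
  · obtain ⟨s, hsT, hs⟩ := hrowrep
    exact exists_of_first_repeat (fun t => ⟨(hrq t).1, (hrq t).2.1, (hrq t).2.2.1⟩) hsT hs hr hq
  -- a first repeated column is a first repeated row of the transposed sequence
  obtain ⟨s, hsT, hs⟩ : ∃ s < T, q s = q T := (Nat.find_spec hrep).resolve_left hrowrep
  have hr' : ∀ u v, u < v → v < T → r (u + 1) ≠ r (v + 1) := fun u v huv hv => by
    rcases Nat.lt_or_ge (v + 1) T with h | h
    · exact hr _ _ (by omega) h
    · rw [show v + 1 = T by omega]
      exact fun he => hrowrep ⟨_, by omega, he⟩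
  obtain ⟨C, hC⟩ := exists_of_first_repeat (S := Prod.swap ⁻¹' S) (q := fun t => r (t + 1))
    (fun t => ⟨(hrq t).2.1, (hrq (t + 1)).1, (hrq t).2.2.2⟩) hsT hs hq hr'
  exact ⟨C.transpose, fun (t : Fin C.length) => ⟨(hC t).2, (hC (t + 1)).1⟩⟩

end ExchangeCycle

section Circuits

variable {k n : ℕ}

theorem isCyclicalExchange_iff {g : Fin k × Fin n → ℝ} :
    IsCyclicalExchange g ↔ ∃ C : ExchangeCycle (Fin k) (Fin n), g = C.vec := by
  constructor
  · rintro ⟨m, hm, c, jj, hc, hjj, rfl⟩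
    have : NeZero m := ⟨by omega⟩
    exact ⟨⟨m, hm, c, jj, hc, hjj⟩, sum_congr rfl fun t _ => by rw [Fin.mk_add_one_mod]⟩
  · rintro ⟨C, rfl⟩
    exact ⟨C.length, C.two_le_length, C.cluster, C.item, C.cluster_injective, C.item_injective,
      sum_congr rfl fun t _ => by rw [Fin.mk_add_one_mod]⟩

theorem isCircuitPPfixed_vec (C : ExchangeCycle (Fin k) (Fin n)) : IsCircuitPPfixed C.vec := by
  choose e he using C.exists_intCast_eq_vec_apply
  refine ⟨C.vec_mem_zeroMarginals.1, C.vec_mem_zeroMarginals.2, C.vec_ne_zero,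
    ⟨e, fun p => (he p).symm, ?_⟩, ?_⟩
  · have hsource : e (C.cluster 0, C.item 0) = -1 := by
      exact_mod_cast (he _).trans (C.vec_apply_source 0)
    have hdvd : univ.gcd e ∣ 1 := by
      simpa [hsource] using gcd_dvd (f := e) (mem_univ (C.cluster 0, C.item 0))
    rw [← Finset.normalize_gcd]
    exact normalize_eq_one.2 (isUnit_of_dvd_one hdvd)
  · rintro ⟨y, hyr, hyc, hy0, hsub⟩
    simp only [neg_ne_zero] at hsub
    have hy := C.eq_smul_vec_of_support_subset ⟨hyr, hyc⟩ fun p hp => by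
      by_contra h
      exact hsub.1 h hp
    have hscalar : -y (C.cluster 0, C.item 0) ≠ 0 := fun h => hy0 (by rw [hy, h, zero_smul])
    exact hsub.2 fun p hp => by
      rw [Set.mem_ofPred_eq, hy, Pi.smul_apply, smul_eq_mul]
      exact mul_ne_zero hscalar hp

theorem exists_eq_vec_of_isCircuitPPfixed {g : Fin k × Fin n → ℝ} (hg : IsCircuitPPfixed g) :
    ∃ C : ExchangeCycle (Fin k) (Fin n), g = C.vec := by
  obtain ⟨hrow, hcol, hg0, ⟨gz, hgz, hgcd⟩, hmin⟩ := hg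
  obtain ⟨C, hC⟩ := ExchangeCycle.exists_of_forall_exists_ne (S := {p | g p ≠ 0})
    (fun p hp => by
      simpa using exists_ne_notMem_of_sum_mem ⊥ (f := fun j => g (p.1, j)) (by simp [hrow])
        (by simpa using hp))
    (fun p hp => by
      simpa using exists_ne_notMem_of_sum_mem ⊥ (f := fun i => g (i, p.2)) (by simp [hcol])
        (by simpa using hp))
    (Function.ne_iff.1 hg0)
  have hCg : ∀ p, C.vec p ≠ 0 → g p ≠ 0 := fun p hp => by
    rcases C.eq_source_or_eq_target_of_vec_ne_zero hp with ⟨t, rfl⟩ | ⟨t, rfl⟩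
    exacts [(hC t).1, (hC t).2]
  have hgC : ∀ p, C.vec p = 0 → g p = 0 := by
    by_contra! h
    obtain ⟨p, hp, hgp⟩ := h
    refine hmin ⟨C.vec, C.vec_mem_zeroMarginals.1, C.vec_mem_zeroMarginals.2, C.vec_ne_zero, ?_⟩
    simp only [neg_ne_zero]
    exact ⟨fun q hq => hCg q hq, fun hsub => hsub hgp hp⟩
  have hg := C.eq_smul_vec_of_support_subset ⟨hrow, hcol⟩ hgC
  set z := -gz (C.cluster 0, C.item 0)
  have hz : (z : ℝ) = -g (C.cluster 0, C.item 0) := by simp [z, hgz]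
  rw [← hz] at hg
  have hdvd : z ∣ 1 := hgcd ▸ dvd_gcd fun p _ => by
    obtain ⟨e, he⟩ := C.exists_intCast_eq_vec_apply p
    refine ⟨e, ?_⟩
    have : (gz p : ℝ) = z * e := by rw [← hgz, hg, Pi.smul_apply, smul_eq_mul, he]
    exact_mod_cast this
  rcases Int.isUnit_iff.1 (isUnit_of_dvd_one hdvd) with h | h
  · exact ⟨C, by rw [hg, h, Int.cast_one, one_smul]⟩
  · exact ⟨C.reverse, by rw [hg, h, C.vec_reverse, Int.cast_neg, Int.cast_one, neg_one_smul]⟩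

theorem isCircuitPPfixed_iff_isCyclicalExchange {g : Fin k × Fin n → ℝ} :
    IsCircuitPPfixed g ↔ IsCyclicalExchange g := by
  rw [isCyclicalExchange_iff]
  exact ⟨exists_eq_vec_of_isCircuitPPfixed, fun ⟨C, hC⟩ => hC ▸ isCircuitPPfixed_vec C⟩

end Circuits

namespace PPfixed

variable {k n : ℕ} {κ : Fin k → ℕ} {x y : Fin k × Fin n → ℝ}

theorem sub_mem_zeroMarginals (hx : x ∈ PPfixed κ) (hy : y ∈ PPfixed κ) :
    x - y ∈ zeroMarginals (Fin k) (Fin n) :=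
  ⟨fun i => by simp [sum_sub_distrib, hx.1 i, hy.1 i],
    fun j => by simp [sum_sub_distrib, hx.2.1 j, hy.2.1 j]⟩

theorem add_smul_mem (hy : y ∈ PPfixed κ) {g : Fin k × Fin n → ℝ}
    (hg : g ∈ zeroMarginals (Fin k) (Fin n)) {s : ℝ} (hs : ∀ p, 0 ≤ y p + s * g p) :
    y + s • g ∈ PPfixed κ :=
  ⟨fun i => by simp [sum_add_distrib, ← mul_sum, hy.1 i, hg.1 i],
    fun j => by simp [sum_add_distrib, ← mul_sum, hy.2.1 j, hg.2 j], fun p => by simpa using hs p⟩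

theorem apply_le_one (hy : y ∈ PPfixed κ) (p : Fin k × Fin n) : y p ≤ 1 :=
  hy.2.1 p.2 ▸ single_le_sum (f := fun i => y (i, p.2)) (fun _ _ => hy.2.2 _) (mem_univ p.1)

theorem apply_eq_zero_of_apply_eq_one (hy : y ∈ PPfixed κ) {i₀ i : Fin k} {j : Fin n}
    (h : y (i₀, j) = 1) (hi : i ≠ i₀) : y (i, j) = 0 :=
  eq_zero_of_apply_eq_sum (f := fun i => y (i, j)) (fun _ => hy.2.2 _) (by rw [hy.2.1 j, h]) hi

theorem notMem_extremePoints_of_pos (C : ExchangeCycle (Fin k) (Fin n)) (hy : y ∈ PPfixed κ)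
    (hpos : ∀ t, 0 < y (C.cluster t, C.item t) ∧ 0 < y (C.cluster (t + 1), C.item t)) :
    y ∉ (PPfixed κ).extremePoints ℝ := by
  intro hext
  obtain ⟨t₀, ht₀⟩ := Finite.exists_min fun t =>
    min (y (C.cluster t, C.item t)) (y (C.cluster (t + 1), C.item t))
  set ε := min (y (C.cluster t₀, C.item t₀)) (y (C.cluster (t₀ + 1), C.item t₀))
  have hε : 0 < ε := lt_min (hpos t₀).1 (hpos t₀).2
  have hmem (s : ℝ) (hs : |s| ≤ ε) : y + s • C.vec ∈ PPfixed κ :=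
    add_smul_mem hy C.vec_mem_zeroMarginals fun q => by
      have := neg_abs_le s
      by_cases hq : C.vec q = 0
      · simp [hq, hy.2.2 q]
      rcases C.eq_source_or_eq_target_of_vec_ne_zero hq with ⟨t, rfl⟩ | ⟨t, rfl⟩
      · rw [C.vec_apply_source]
        linarith [le_abs_self s, ht₀ t, min_le_left (y (C.cluster t, C.item t))
          (y (C.cluster (t + 1), C.item t))]
      · rw [C.vec_apply_target]
        linarith [ht₀ t, min_le_right (y (C.cluster t, C.item t))
          (y (C.cluster (t + 1), C.item t))]
  have hzero := eq_zero_of_add_mem_of_sub_mem_extremePoints hext (hmem ε (by rw [abs_of_pos hε]))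
    (by simpa [sub_eq_add_neg] using hmem (-ε) (by rw [abs_neg, abs_of_pos hε]))
  exact C.vec_ne_zero ((smul_eq_zero.1 hzero).resolve_left hε.ne')

/-- Row and column sums are integers, so the non-integral entries of a point of `PP(κ)` meet
every row and column they touch at least twice. -/
theorem apply_mem_range_intCast_of_mem_extremePoints (hy : y ∈ (PPfixed κ).extremePoints ℝ)
    (p : Fin k × Fin n) : y p ∈ (Int.castAddHom ℝ).range := by
  set A := (Int.castAddHom ℝ).range
  by_contra hp
  obtain ⟨C, hC⟩ := ExchangeCycle.exists_of_forall_exists_ne (S := {q | y q ∉ A})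
    (fun q hq => exists_ne_notMem_of_sum_mem A (f := fun j => y (q.1, j))
      (by rw [hy.1.1 q.1]; exact ⟨κ q.1, by simp⟩) hq)
    (fun q hq => exists_ne_notMem_of_sum_mem A (f := fun i => y (i, q.2))
      (by rw [hy.1.2.1 q.2]; exact ⟨1, by simp⟩) hq)
    ⟨p, hp⟩
  have hpos : ∀ q ∈ {q | y q ∉ A}, 0 < y q := fun q hq =>
    (hy.1.2.2 q).lt_of_ne fun h => hq ⟨0, by simp [← h]⟩
  exact notMem_extremePoints_of_pos C hy.1 (fun t => ⟨hpos _ (hC t).1, hpos _ (hC t).2⟩) hy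

theorem apply_eq_zero_or_one_of_mem_extremePoints (hy : y ∈ (PPfixed κ).extremePoints ℝ)
    (p : Fin k × Fin n) : y p = 0 ∨ y p = 1 := by
  obtain ⟨z, hz⟩ := apply_mem_range_intCast_of_mem_extremePoints hy p
  simp only [Int.coe_castAddHom] at hz
  have h₀ : (0 : ℝ) ≤ z := hz ▸ hy.1.2.2 p
  have h₁ : (z : ℝ) ≤ 1 := hz ▸ apply_le_one hy.1 p
  have : z = 0 ∨ z = 1 := by
    have : 0 ≤ z := by exact_mod_cast h₀
    have : z ≤ 1 := by exact_mod_cast h₁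
    omega
  rcases this with rfl | rfl <;> simp [← hz]

variable (C : ExchangeCycle (Fin k) (Fin n))

section Step

variable {C} (hy : y ∈ PPfixed κ) (hone : ∀ t, y (C.cluster t, C.item t) = 1)
include hy hone

theorem add_smul_vec_mem {s : ℝ} (hs₀ : 0 ≤ s) (hs₁ : s ≤ 1) : y + s • C.vec ∈ PPfixed κ :=
  add_smul_mem hy C.vec_mem_zeroMarginals fun p => by
    by_cases hp : C.vec p = 0
    · simp [hp, hy.2.2 p]
    rcases C.eq_source_or_eq_target_of_vec_ne_zero hp with ⟨t, rfl⟩ | ⟨t, rfl⟩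
    · simp [C.vec_apply_source, hone t, hs₁]
    · simp [C.vec_apply_target, add_nonneg (hy.2.2 _) hs₀]

variable (h01 : ∀ p, y p = 0 ∨ y p = 1)
include h01

theorem add_vec_apply_eq_zero_or_one (p : Fin k × Fin n) :
    (y + C.vec) p = 0 ∨ (y + C.vec) p = 1 := by
  by_cases hp : C.vec p = 0
  · simpa [hp] using h01 p
  rcases C.eq_source_or_eq_target_of_vec_ne_zero hp with ⟨t, rfl⟩ | ⟨t, rfl⟩
  · simp [C.vec_apply_source, hone t]
  · simp [C.vec_apply_target, apply_eq_zero_of_apply_eq_one hy (hone t) (C.cluster_add_one_ne t)]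

/-- In a column of the cycle, `x` and `y` both vanish off the two cells of the cycle; in any other
column `x ≤ y` entrywise, with equal sums. -/
theorem apply_eq_of_vec_apply_eq_zero (hx : x ∈ PPfixed κ)
    (hxZ : ∀ p, y p = 0 → C.vec p = 0 → x p = 0) {p : Fin k × Fin n} (hp : C.vec p = 0) :
    x p = y p := by
  obtain ⟨i, j⟩ := p
  by_cases hj : ∃ t, j = C.item t
  · obtain ⟨t, rfl⟩ := hj
    have hi : i ≠ C.cluster t := fun h => by simp [h, C.vec_apply_source] at hp
    have hyi := apply_eq_zero_of_apply_eq_one hy (hone t) hi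
    rw [hyi, hxZ _ hyi hp]
  · have hle : ∀ i ∈ univ, x (i, j) ≤ y (i, j) := fun i _ => by
      rcases h01 (i, j) with h | h
      · rw [hxZ _ h (C.vec_apply_of_forall_ne (not_exists.1 hj) i), h]
      · exact h ▸ apply_le_one hx _
    exact (sum_eq_sum_iff_of_le hle).1 (by rw [hx.2.1, hy.2.1]) i (mem_univ i)

theorem segment_add_vec_eq :
    segment ℝ y (y + C.vec) = {x ∈ PPfixed κ | ∀ p ∈ {p | y p = 0 ∧ C.vec p = 0}, x p = 0} := by
  rw [segment_eq_image', add_sub_cancel_left]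
  ext x
  constructor
  · rintro ⟨s, ⟨hs₀, hs₁⟩, rfl⟩
    exact ⟨add_smul_vec_mem hy hone hs₀ hs₁, fun p ⟨hyp, hp⟩ => by simp [hyp, hp]⟩
  · rintro ⟨hx, hxZ⟩
    have hd := C.eq_smul_vec_of_support_subset (sub_mem_zeroMarginals hx hy) fun p hp =>
      sub_eq_zero.2 <|
        apply_eq_of_vec_apply_eq_zero hy hone h01 hx (fun p h₀ h₁ => hxZ p ⟨h₀, h₁⟩) hp
    have h₀ := hx.2.2 (C.cluster 0, C.item 0)
    have h₁ := apply_le_one hx (C.cluster 0, C.item 0)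
    refine ⟨-(x - y) (C.cluster 0, C.item 0), ⟨?_, ?_⟩, by simp only; rw [← hd, add_sub_cancel]⟩ <;>
      simp only [Pi.sub_apply, hone] <;> linarith

theorem isExtreme_segment_add_vec : IsExtreme ℝ (PPfixed κ) (segment ℝ y (y + C.vec)) := by
  rw [segment_add_vec_eq hy hone h01]
  exact isExtreme_setOf_apply_eq_zero (fun x hx => hx.2.2) _

end Step

theorem eq_one_and_source_eq_one_of_maximal (hy : y ∈ PPfixed κ)
    (h01 : ∀ p, y p = 0 ∨ y p = 1) {α : ℝ} (hα : 0 < α) (hyα : y + α • C.vec ∈ PPfixed κ)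
    (hmax : ∀ β, α < β → y + β • C.vec ∉ PPfixed κ) :
    α = 1 ∧ ∀ t, y (C.cluster t, C.item t) = 1 := by
  have hone (t : Fin C.length) : y (C.cluster t, C.item t) = 1 := by
    have := hyα.2.2 (C.cluster t, C.item t)
    simp only [Pi.add_apply, Pi.smul_apply, C.vec_apply_source, smul_eq_mul] at this
    exact (h01 _).resolve_left fun h => by linarith
  refine ⟨le_antisymm ?_ ?_, hone⟩
  · have := hyα.2.2 (C.cluster 0, C.item 0)
    simp only [Pi.add_apply, Pi.smul_apply, C.vec_apply_source, smul_eq_mul, hone] at this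
    linarith
  · by_contra! h
    exact hmax 1 h (add_smul_vec_mem hy hone zero_le_one le_rfl)

theorem circuit_step (hy : y ∈ PPfixed κ) (h01 : ∀ p, y p = 0 ∨ y p = 1)
    {g : Fin k × Fin n → ℝ} (hg : IsCircuitPPfixed g) {α : ℝ} (hα : 0 < α)
    (hyα : y + α • g ∈ PPfixed κ) (hmax : ∀ β, α < β → y + β • g ∉ PPfixed κ) :
    (∀ p, (y + α • g) p = 0 ∨ (y + α • g) p = 1) ∧ y ≠ y + α • g ∧
      IsExtreme ℝ (PPfixed κ) (segment ℝ y (y + α • g)) := by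
  obtain ⟨C, rfl⟩ := exists_eq_vec_of_isCircuitPPfixed hg
  obtain ⟨rfl, hone⟩ := eq_one_and_source_eq_one_of_maximal C hy h01 hα hyα hmax
  rw [one_smul]
  exact ⟨add_vec_apply_eq_zero_or_one hy hone h01, fun h => C.vec_ne_zero (by simpa using h),
    isExtreme_segment_add_vec hy hone h01⟩

theorem isEdgeWalk_of_isCircuitWalk {k' : ℕ} {y : Fin (k' + 1) → Fin k × Fin n → ℝ}
    (hy : IsCircuitWalk (PPfixed κ) IsCircuitPPfixed y) : IsEdgeWalk (PPfixed κ) y := by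
  obtain ⟨h₀, hlast, hsteps⟩ := hy
  have hmem : ∀ i, y i ∈ PPfixed κ := Fin.lastCases hlast.1 fun i => (hsteps i).1
  have hstep (i : Fin k') (h01 : ∀ p, y i.castSucc p = 0 ∨ y i.castSucc p = 1) :
      (∀ p, y i.succ p = 0 ∨ y i.succ p = 1) ∧ y i.castSucc ≠ y i.succ ∧
        IsExtreme ℝ (PPfixed κ) (segment ℝ (y i.castSucc) (y i.succ)) := by
    obtain ⟨-, g, α, hg, hα, hsucc, hmax⟩ := hsteps i
    have hnext := hmem i.succ
    rw [hsucc] at hnext ⊢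
    exact circuit_step (hmem _) h01 hg hα hnext hmax
  have h01 : ∀ i p, y i p = 0 ∨ y i p = 1 :=
    Fin.induction (apply_eq_zero_or_one_of_mem_extremePoints h₀) fun i h => (hstep i h).1
  exact fun i => (hstep i (h01 _)).2

end PPfixed

theorem fixed_size_partition_polytope_circuits_and_edge_walks_general
    {k n : ℕ} (κ : Fin k → ℕ) :
    (∀ g : Fin k × Fin n → ℝ, IsCircuitPPfixed g ↔ IsCyclicalExchange g) ∧
    (∀ (k' : ℕ) (y : Fin (k' + 1) → Fin k × Fin n → ℝ),
      IsCircuitWalk (PPfixed (n := n) κ) IsCircuitPPfixed y →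
        IsEdgeWalk (PPfixed (n := n) κ) y) :=
  ⟨fun _ => isCircuitPPfixed_iff_isCyclicalExchange, fun _ _ => PPfixed.isEdgeWalk_of_isCircuitWalk⟩

theorem fixed_size_partition_polytope_circuits_and_edge_walks
    {k n : ℕ} (hk : 0 < k) (hn : 0 < n) (κ : Fin k → ℕ)
    (hκpos : ∀ i, 0 < κ i) (hκsum : ∑ i, κ i = n) :
    (∀ g : Fin k × Fin n → ℝ, IsCircuitPPfixed g ↔ IsCyclicalExchange g) ∧
    (∀ (k' : ℕ) (y : Fin (k' + 1) → Fin k × Fin n → ℝ),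
      IsCircuitWalk (PPfixed (n := n) κ) IsCircuitPPfixed y →
        IsEdgeWalk (PPfixed (n := n) κ) y) :=
  fixed_size_partition_polytope_circuits_and_edge_walks_general κ
end

section
/- Let M be a matroid with rank function f on a ground set E with {1, 2, 3, 4} ⊆ E such that {1, 2, 3, 4} is independent in M, and consider the matroid polytope P(f) = {x ∈ ℝ^E : x ≥ 0, Σ_{e ∈ S} x_e ≤ f(S) for all S ⊆ E}, with circuits taken with respect to this constraint system. Then the vector g ∈ ℝ^E with g₁ = 2, g₂ = g₃ = g₄ = −1, and g_e = 0 otherwise is a circuit of P(f); the incidence vector χ of the independent set {2, 3, 4} is a vertex of P(f); the maximal step size from χ along g is α = 1/2; and the resulting point χ + ½g, with coordinates 1, ½, ½, ½ on {1,2,3,4} and 0 elsewhere, is a non-integral point of P(f). In particular, P(f) admits a non-integral circuit walk. -/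
/-!
STATEMENT 19: For a matroid M with rank function f on ground set E ⊇ {1,2,3,4} in which
{1,2,3,4} is independent, the vector g with g₁ = 2, g₂ = g₃ = g₄ = -1 (and 0 elsewhere) is a
circuit of the matroid polytope P(f); the incidence vector χ of {2,3,4} is a vertex of P(f);
the maximal step size from χ along g is α = 1/2; and χ + ½g is a non-integral point of P(f).
In particular, P(f) admits a non-integral circuit walk.
-/

/-- The matroid polytope `P(f) = {x ≥ 0 : ∑_{e ∈ S} x_e ≤ f(S) for all S ⊆ E}`. -/
def MatroidPolytope {E : Type*} [Fintype E] (f : Finset E → ℕ) : Set (E → ℝ) :=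
  {x | (∀ i, 0 ≤ x i) ∧ ∀ S : Finset E, ∑ i ∈ S, x i ≤ (f S : ℝ)}

/-- The rows `B x` of the inequality system defining the matroid polytope, applied to `x`:
nonnegativity rows `-x_i` and rank rows `∑_{i ∈ S} x_i`. -/
def MPIneq {E : Type*} [Fintype E] (x : E → ℝ) : E ⊕ Finset E → ℝ :=
  Sum.elim (fun i => -x i) fun S => ∑ i ∈ S, x i

/-- `g` is a circuit of the inequality system defining the matroid polytope: `g ≠ 0` with
coprime integer components and `B g` support-minimal over `{B x : x ≠ 0}`. -/
def IsCircuitMP {E : Type*} [Fintype E] (g : E → ℝ) : Prop :=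
  g ≠ 0 ∧
  (∃ gz : E → ℤ, (∀ i, g i = (gz i : ℝ)) ∧ Finset.univ.gcd gz = 1) ∧
  ¬ ∃ y : E → ℝ, y ≠ 0 ∧ {r | MPIneq y r ≠ 0} ⊂ {r | MPIneq g r ≠ 0}

/-- A circuit walk is integral if all of its points have integer components. -/
def IsIntegralWalk {ι : Type*} {k : ℕ} (y : Fin (k + 1) → ι → ℝ) : Prop :=
  ∀ i p, ∃ z : ℤ, y i p = (z : ℝ)

/-! Since `f {i} ≤ 1`, the polytope `P(f)` lies in the unit cube, so every 0/1 point of `P(f)` is a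
vertex and the coordinate at `e 0` caps the step from `χ` along `g` at `1/2`; as `{e 0, …, e 3}` is
independent, every point of the cube supported on it lies in `P(f)`, in particular `χ + ½ g`.
The direction `g` is a circuit because the only solutions of the rows vanishing on `g` (the
nonnegativity rows off `{e 0, …, e 3}` and the rank rows of the triples `{e 0, e a, e b}`) are
multiples of `g`. Stepping back along `-g` returns to the vertex `χ` and closes a circuit walk
through the half-integral point `χ + ½ g`. -/

open Finset

section Polytope

variable {E : Type*}

def IsRankFunction (M : Matroid E) (f : Finset E → ℕ) : Prop :=
  ∀ S : Finset E, IsGreatest {c : ℕ | ∃ I : Finset E, I ⊆ S ∧ M.Indep ↑I ∧ I.card = c} (f S)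

variable {M : Matroid E} {f : Finset E → ℕ}

lemma IsRankFunction.le_card (hf : IsRankFunction M f) (S : Finset E) : f S ≤ S.card := by
  obtain ⟨I, hIS, -, hI⟩ := (hf S).1
  exact hI ▸ card_le_card hIS

lemma IsRankFunction.card_le (hf : IsRankFunction M f) {I S : Finset E} (hIS : I ⊆ S)
    (hI : M.Indep ↑I) : I.card ≤ f S :=
  (hf S).2 ⟨I, hIS, hI, rfl⟩

variable [Fintype E]

lemma IsRankFunction.matroidPolytope_subset_Icc (hf : IsRankFunction M f) :
    MatroidPolytope f ⊆ Set.Icc 0 1 := by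
  refine fun x hx => ⟨hx.1, fun i => ?_⟩
  have hi : x i ≤ f {i} := by simpa using hx.2 {i}
  have hfi : (f {i} : ℝ) ≤ 1 := by exact_mod_cast (hf.le_card {i}).trans_eq (card_singleton i)
  exact hi.trans hfi

lemma IsRankFunction.notMem_matroidPolytope (hf : IsRankFunction M f) {x : E → ℝ} {i : E}
    (hi : 1 < x i) : x ∉ MatroidPolytope f :=
  fun hx => (hf.matroidPolytope_subset_Icc hx).2 i |>.not_gt hi

lemma IsRankFunction.mem_matroidPolytope (hf : IsRankFunction M f) {A : Set E} (hA : M.Indep A)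
    {x : E → ℝ} (hx : x ∈ Set.Icc 0 1) (hsupp : Function.support x ⊆ A) :
    x ∈ MatroidPolytope f := by
  classical
  refine ⟨hx.1, fun S => ?_⟩
  set I := S.filter (· ∈ A)
  have hI : M.Indep ↑I := hA.subset fun i hi => (mem_filter.1 hi).2
  calc ∑ i ∈ S, x i = ∑ i ∈ I, x i :=
        (sum_filter_of_ne fun i _ hxi => hsupp hxi).symm
    _ ≤ ∑ _i ∈ I, (1 : ℝ) := sum_le_sum fun i _ => hx.2 i
    _ = I.card := by simp
    _ ≤ f S := by exact_mod_cast hf.card_le (filter_subset _ S) hI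

end Polytope

lemma mem_extremePoints_of_subset_Icc {ι : Type*} {P : Set (ι → ℝ)} (hP : P ⊆ Set.Icc 0 1)
    {x : ι → ℝ} (hx : x ∈ P) (h01 : ∀ i, x i = 0 ∨ x i = 1) : x ∈ P.extremePoints ℝ :=
  inter_extremePoints_subset_extremePoints_of_subset hP
    ⟨hx, by rw [← Set.pi_univ_Icc, extremePoints_pi]; simpa using h01⟩

/-- `x` would otherwise lie strictly between the points `x + α • g` and `x - t • g` of `P`. -/
lemma sub_smul_notMem_of_mem_extremePoints {ι : Type*} {P : Set (ι → ℝ)} {x g : ι → ℝ}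
    (hx : x ∈ P.extremePoints ℝ) (hg : g ≠ 0) {α t : ℝ} (hα : 0 < α) (ht : 0 < t)
    (hmem : x + α • g ∈ P) : x - t • g ∉ P := by
  intro hsub
  have hseg : x ∈ openSegment ℝ (x + α • g) (x - t • g) := by
    refine ⟨t / (α + t), α / (α + t), by positivity, by positivity, by field_simp; ring, ?_⟩
    ext i
    simp only [Pi.add_apply, Pi.sub_apply, Pi.smul_apply, smul_eq_mul]
    field_simp
    ring
  have hαg : α • g = 0 := add_eq_left.1 ((mem_extremePoints.1 hx).2 _ hmem _ hsub hseg).1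
  exact hg ((smul_eq_zero.1 hαg).resolve_left hα.ne')

lemma isCircuitWalk_forth_and_back {ι : Type*} {P : Set (ι → ℝ)} {Circ : (ι → ℝ) → Prop}
    {x g : ι → ℝ} (hx : x ∈ P.extremePoints ℝ) (hg : Circ g) (hg' : Circ (-g)) (hg0 : g ≠ 0)
    {α : ℝ} (hα : 0 < α) (hmem : x + α • g ∈ P) (hmax : ∀ β, α < β → x + β • g ∉ P) :
    IsCircuitWalk P Circ ![x, x + α • g, x] := by
  refine ⟨hx, hx, ?_⟩
  rw [Fin.forall_fin_two]
  refine ⟨⟨hx.1, g, α, hg, hα, rfl, hmax⟩, ⟨hmem, -g, α, hg', hα, by simp, fun β hβ => ?_⟩⟩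
  have hstep : x + α • g + β • -g = x - (β - α) • g := by module
  show x + α • g + β • -g ∉ P
  rw [hstep]
  exact sub_smul_notMem_of_mem_extremePoints hx hg0 hα (sub_pos.2 hβ) hmem

section Circuit

variable {E : Type*} [Fintype E]

lemma MPIneq_smul (c : ℝ) (x : E → ℝ) (r : E ⊕ Finset E) :
    MPIneq (c • x) r = c * MPIneq x r := by
  cases r <;> simp [MPIneq, mul_sum]

lemma support_MPIneq_smul {c : ℝ} (hc : c ≠ 0) (x : E → ℝ) :
    {r | MPIneq (c • x) r ≠ 0} = {r | MPIneq x r ≠ 0} := by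
  ext r
  simp [MPIneq_smul, hc]

lemma IsCircuitMP.neg {g : E → ℝ} (h : IsCircuitMP g) : IsCircuitMP (-g) := by
  obtain ⟨h0, ⟨gz, hgz, hgcd⟩, hmin⟩ := h
  refine ⟨neg_ne_zero.2 h0, ⟨-gz, fun i => by simp [hgz i], ?_⟩, ?_⟩
  · exact Int.eq_one_of_dvd_one Int.finsetGcd_nonneg
      (hgcd ▸ dvd_gcd fun i _ => dvd_neg.1 (gcd_dvd (mem_univ i)))
  · rwa [← neg_one_smul ℝ g, support_MPIneq_smul (by norm_num)]

lemma isCircuitMP_of_forall_eq_smul {g : E → ℝ} (gz : E → ℤ) (hgz : ∀ i, g i = gz i)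
    (hgcd : univ.gcd gz = 1)
    (h : ∀ y : E → ℝ, (∀ r, MPIneq g r = 0 → MPIneq y r = 0) → ∃ c : ℝ, y = c • g) :
    IsCircuitMP g := by
  refine ⟨?_, ⟨gz, hgz, hgcd⟩, ?_⟩
  · intro h0
    have : univ.gcd gz = 0 :=
      gcd_eq_zero_iff.2 fun i _ => by simpa using (hgz i).symm.trans (congrFun h0 i)
    simp_all
  · rintro ⟨y, hy0, hss⟩
    obtain ⟨c, rfl⟩ := h y fun r hr => by_contra fun hy => hss.subset hy hr
    have hc : c ≠ 0 := by rintro rfl; simp at hy0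
    exact hss.ne (support_MPIneq_smul hc g)

end Circuit

section Example

variable {E : Type*} [DecidableEq E] {e : Fin 4 → E}

def exampleCircuit (e : Fin 4 → E) : E → ℝ :=
  fun i => if i = e 0 then 2 else if i = e 1 ∨ i = e 2 ∨ i = e 3 then -1 else 0

def exampleVertex (e : Fin 4 → E) : E → ℝ :=
  fun i => if i = e 1 ∨ i = e 2 ∨ i = e 3 then 1 else 0

lemma exampleCircuit_apply (he : Function.Injective e) (j : Fin 4) :
    exampleCircuit e (e j) = if j = 0 then 2 else -1 := by
  fin_cases j <;> simp [exampleCircuit, he.eq_iff]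

lemma exampleVertex_apply (he : Function.Injective e) (j : Fin 4) :
    exampleVertex e (e j) = if j = 0 then 0 else 1 := by
  fin_cases j <;> simp [exampleVertex, he.eq_iff]

lemma exampleCircuit_apply_of_notMem_range {i : E} (hi : i ∉ Set.range e) :
    exampleCircuit e i = 0 := by
  have : ∀ j, i ≠ e j := fun j h => hi ⟨j, h.symm⟩
  simp [exampleCircuit, this]

lemma exampleVertex_apply_of_notMem_range {i : E} (hi : i ∉ Set.range e) :
    exampleVertex e i = 0 := by
  have : ∀ j, i ≠ e j := fun j h => hi ⟨j, h.symm⟩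
  simp [exampleVertex, this]

lemma sum_insert_insert_singleton_apply (he : Function.Injective e) {a b c : Fin 4}
    (hab : a ≠ b) (hac : a ≠ c) (hbc : b ≠ c) (x : E → ℝ) :
    ∑ i ∈ ({e a, e b, e c} : Finset E), x i = x (e a) + x (e b) + x (e c) := by
  rw [sum_insert (by simp [he.eq_iff, hab, hac]), sum_insert (by simp [he.eq_iff, hbc]),
    sum_singleton, add_assoc]

lemma exampleVertex_eq_zero_or_one (i : E) : exampleVertex e i = 0 ∨ exampleVertex e i = 1 := by
  unfold exampleVertex
  split_ifs <;> simp

lemma support_exampleVertex_add_smul_exampleCircuit_subset (c : ℝ) :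
    Function.support (exampleVertex e + c • exampleCircuit e) ⊆ Set.range e := by
  intro i hi
  by_contra hi'
  simp [exampleVertex_apply_of_notMem_range hi', exampleCircuit_apply_of_notMem_range hi'] at hi

lemma exampleVertex_add_half_smul_exampleCircuit (he : Function.Injective e) :
    exampleVertex e + (1 / 2 : ℝ) • exampleCircuit e = fun i =>
      if i = e 0 then 1 else if i = e 1 ∨ i = e 2 ∨ i = e 3 then (1 / 2 : ℝ) else 0 := by
  funext i
  obtain ⟨j, rfl⟩ | hi := em (i ∈ Set.range e)
  · fin_cases j <;> simp [exampleVertex_apply he, exampleCircuit_apply he, he.eq_iff] <;> norm_num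
  · have : ∀ j, i ≠ e j := fun j h => hi ⟨j, h.symm⟩
    simp [exampleVertex_apply_of_notMem_range hi, exampleCircuit_apply_of_notMem_range hi, this]

variable [Fintype E]

lemma eq_smul_exampleCircuit (he : Function.Injective e) {y : E → ℝ}
    (hy : ∀ r, MPIneq (exampleCircuit e) r = 0 → MPIneq y r = 0) :
    y = (-y (e 1)) • exampleCircuit e := by
  have hoff : ∀ i ∉ Set.range e, y i = 0 := fun i hi => by
    simpa [MPIneq] using hy (.inl i) (by simp [MPIneq, exampleCircuit_apply_of_notMem_range hi])
  have htriple : ∀ a b : Fin 4, a ≠ 0 → b ≠ 0 → a ≠ b → y (e 0) + y (e a) + y (e b) = 0 := by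
    intro a b ha hb hab
    have hsum := sum_insert_insert_singleton_apply he ha.symm hb.symm hab
    simpa [MPIneq, hsum] using hy (.inr {e 0, e a, e b})
      (by simp [MPIneq, hsum, exampleCircuit_apply he, ha, hb]; norm_num)
  have h12 := htriple 1 2 (by decide) (by decide) (by decide)
  have h13 := htriple 1 3 (by decide) (by decide) (by decide)
  have h23 := htriple 2 3 (by decide) (by decide) (by decide)
  funext i
  obtain ⟨j, rfl⟩ | hi := em (i ∈ Set.range e)
  · fin_cases j <;> simp [exampleCircuit_apply he] <;> linarith
  · simp [hoff i hi, exampleCircuit_apply_of_notMem_range hi]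

lemma isCircuitMP_exampleCircuit (he : Function.Injective e) : IsCircuitMP (exampleCircuit e) := by
  let gz : E → ℤ := fun i => if i = e 0 then 2 else if i = e 1 ∨ i = e 2 ∨ i = e 3 then -1 else 0
  have hgz1 : gz (e 1) = -1 := by simp [gz, he.eq_iff]
  refine isCircuitMP_of_forall_eq_smul gz (fun i => ?_) ?_
    fun y hy => ⟨_, eq_smul_exampleCircuit he hy⟩
  · simp only [exampleCircuit, gz]
    split_ifs <;> norm_num
  · exact Int.eq_one_of_dvd_one Int.finsetGcd_nonneg
      ((gcd_dvd (mem_univ (e 1))).trans (by rw [hgz1]; norm_num))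

end Example

section ExampleInPolytope

variable {E : Type*} [Fintype E] [DecidableEq E] {M : Matroid E} {f : Finset E → ℕ}
  {e : Fin 4 → E}

lemma IsRankFunction.exampleVertex_mem_extremePoints (hf : IsRankFunction M f)
    (hind : M.Indep (Set.range e)) :
    exampleVertex e ∈ (MatroidPolytope f).extremePoints ℝ := by
  have h01 := exampleVertex_eq_zero_or_one (e := e)
  refine mem_extremePoints_of_subset_Icc hf.matroidPolytope_subset_Icc
    (hf.mem_matroidPolytope hind ?_ ?_) h01
  · constructor <;> intro i <;> rcases h01 i with h | h <;> simp [h]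
  · simpa using support_exampleVertex_add_smul_exampleCircuit_subset (e := e) 0

lemma IsRankFunction.exampleVertex_add_half_smul_mem (hf : IsRankFunction M f)
    (he : Function.Injective e) (hind : M.Indep (Set.range e)) :
    exampleVertex e + (1 / 2 : ℝ) • exampleCircuit e ∈ MatroidPolytope f := by
  refine hf.mem_matroidPolytope hind ?_ (support_exampleVertex_add_smul_exampleCircuit_subset _)
  rw [exampleVertex_add_half_smul_exampleCircuit he]
  constructor <;> intro i <;> dsimp only <;> split_ifs <;> norm_num

lemma IsRankFunction.exampleVertex_add_smul_notMem (hf : IsRankFunction M f)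
    (he : Function.Injective e) {α : ℝ} (hα : 1 / 2 < α) :
    exampleVertex e + α • exampleCircuit e ∉ MatroidPolytope f :=
  hf.notMem_matroidPolytope (i := e 0) <| by
    simp [exampleVertex_apply he, exampleCircuit_apply he]
    linarith

end ExampleInPolytope

lemma intCast_ne_one_half (z : ℤ) : (z : ℝ) ≠ 1 / 2 := by
  intro h
  have : 2 * z = 1 := by exact_mod_cast (by linarith : (2 * z : ℝ) = 1)
  omega

lemma exampleVertex_add_half_smul_exampleCircuit_not_integral {E : Type*} [DecidableEq E]
    {e : Fin 4 → E} (he : Function.Injective e) :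
    ¬ ∀ i, ∃ z : ℤ, (exampleVertex e + (1 / 2 : ℝ) • exampleCircuit e) i = z := fun h => by
  obtain ⟨z, hz⟩ := h (e 1)
  refine intCast_ne_one_half z (hz.symm.trans ?_)
  simp [exampleVertex_apply he, exampleCircuit_apply he]
  norm_num

theorem matroid_polytope_nonintegral_circuit_walk_general
    {E : Type*} [Fintype E] [DecidableEq E]
    (M : Matroid E)
    (f : Finset E → ℕ)
    (hf : ∀ S : Finset E,
      IsGreatest {c : ℕ | ∃ I : Finset E, I ⊆ S ∧ M.Indep ↑I ∧ I.card = c} (f S))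
    (e : Fin 4 → E) (he : Function.Injective e)
    (hind : M.Indep (Set.range e)) :
    let g : E → ℝ := fun i =>
      if i = e 0 then 2 else if i = e 1 ∨ i = e 2 ∨ i = e 3 then -1 else 0
    let χ : E → ℝ := fun i => if i = e 1 ∨ i = e 2 ∨ i = e 3 then 1 else 0
    IsCircuitMP g ∧
    χ ∈ (MatroidPolytope f).extremePoints ℝ ∧
    χ + (1 / 2 : ℝ) • g ∈ MatroidPolytope f ∧
    (∀ α : ℝ, 1 / 2 < α → χ + α • g ∉ MatroidPolytope f) ∧
    (χ + (1 / 2 : ℝ) • g = fun i =>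
      if i = e 0 then 1 else if i = e 1 ∨ i = e 2 ∨ i = e 3 then (1 / 2 : ℝ) else 0) ∧
    (¬ ∀ i, ∃ z : ℤ, (χ + (1 / 2 : ℝ) • g) i = (z : ℝ)) ∧
    ∃ (k : ℕ) (y : Fin (k + 1) → E → ℝ),
      IsCircuitWalk (MatroidPolytope f) IsCircuitMP y ∧ ¬ IsIntegralWalk y := by
  intro g χ
  have hf : IsRankFunction M f := hf
  have hg : IsCircuitMP g := isCircuitMP_exampleCircuit he
  have hχ : χ ∈ (MatroidPolytope f).extremePoints ℝ := hf.exampleVertex_mem_extremePoints hind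
  have hmid : χ + (1 / 2 : ℝ) • g ∈ MatroidPolytope f := hf.exampleVertex_add_half_smul_mem he hind
  have hmax : ∀ α : ℝ, 1 / 2 < α → χ + α • g ∉ MatroidPolytope f :=
    fun _ hα => hf.exampleVertex_add_smul_notMem he hα
  have hnonint : ¬ ∀ i, ∃ z : ℤ, (χ + (1 / 2 : ℝ) • g) i = z :=
    exampleVertex_add_half_smul_exampleCircuit_not_integral he
  exact ⟨hg, hχ, hmid, hmax, exampleVertex_add_half_smul_exampleCircuit he, hnonint, 2, _,
    isCircuitWalk_forth_and_back hχ hg hg.neg hg.1 one_half_pos hmid hmax, fun h => hnonint (h 1)⟩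

theorem matroid_polytope_nonintegral_circuit_walk
    {E : Type*} [Fintype E] [DecidableEq E]
    (M : Matroid E) (hME : M.E = Set.univ)
    (f : Finset E → ℕ)
    (hf : ∀ S : Finset E,
      IsGreatest {c : ℕ | ∃ I : Finset E, I ⊆ S ∧ M.Indep ↑I ∧ I.card = c} (f S))
    (e : Fin 4 → E) (he : Function.Injective e)
    (hind : M.Indep (Set.range e)) :
    let g : E → ℝ := fun i =>
      if i = e 0 then 2 else if i = e 1 ∨ i = e 2 ∨ i = e 3 then -1 else 0
    let χ : E → ℝ := fun i => if i = e 1 ∨ i = e 2 ∨ i = e 3 then 1 else 0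
    IsCircuitMP g ∧
    χ ∈ (MatroidPolytope f).extremePoints ℝ ∧
    χ + (1 / 2 : ℝ) • g ∈ MatroidPolytope f ∧
    (∀ α : ℝ, 1 / 2 < α → χ + α • g ∉ MatroidPolytope f) ∧
    (χ + (1 / 2 : ℝ) • g = fun i =>
      if i = e 0 then 1 else if i = e 1 ∨ i = e 2 ∨ i = e 3 then (1 / 2 : ℝ) else 0) ∧
    (¬ ∀ i, ∃ z : ℤ, (χ + (1 / 2 : ℝ) • g) i = (z : ℝ)) ∧
    ∃ (k : ℕ) (y : Fin (k + 1) → E → ℝ),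
      IsCircuitWalk (MatroidPolytope f) IsCircuitMP y ∧ ¬ IsIntegralWalk y :=
  matroid_polytope_nonintegral_circuit_walk_general M f hf e he hind
end
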